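/- arXiv:1005.0728 — 2 statements merged into one kernel-verified Lean document; each statement's English description precedes it below -/
import Mathlib

section
/- For all real numbers x and y, and every p with 1/2 < p < 1, |(x⁺)^{2p} − (y⁺)^{2p}| ≤ (2 + |x| + |y|)·|x − y|^p. -/
/-! With `a = x⁺`, `b = y⁺`, factor `a ^ (2p) - b ^ (2p) = (a ^ p + b ^ p) (a ^ p - b ^ p)`.
Subadditivity of `t ↦ t ^ p` on `[0, ∞)` makes it `p`-Hölder, so the second factor is at most
`|a - b| ^ p ≤ |x - y| ^ p`, while `a ^ p ≤ 1 + a ≤ 1 + |x|` bounds the first by `2 + |x| + |y|`. -/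

namespace Real

variable {a b p : ℝ}

theorem abs_rpow_sub_rpow_le (ha : 0 ≤ a) (hb : 0 ≤ b) (hp : 0 ≤ p) (hp1 : p ≤ 1) :
    |a ^ p - b ^ p| ≤ |a - b| ^ p := by
  wlog hba : b ≤ a generalizing a b
  · rw [abs_sub_comm, abs_sub_comm a]
    exact this hb ha (le_of_not_ge hba)
  have hsub : a ^ p ≤ (a - b) ^ p + b ^ p := by
    simpa using rpow_add_le_add_rpow (sub_nonneg.mpr hba) hb hp hp1
  rw [abs_of_nonneg (sub_nonneg.mpr (rpow_le_rpow hb hba hp)), abs_of_nonneg (sub_nonneg.mpr hba)]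
  linarith

theorem rpow_le_one_add (ha : 0 ≤ a) (hp : 0 ≤ p) (hp1 : p ≤ 1) : a ^ p ≤ 1 + a := by
  rcases le_total a 1 with h | h
  · linarith [rpow_le_one ha h hp]
  · linarith [rpow_le_self_of_one_le h hp1]

theorem abs_rpow_two_mul_sub_rpow_two_mul_le (ha : 0 ≤ a) (hb : 0 ≤ b) (hp : 0 ≤ p)
    (hp1 : p ≤ 1) : |a ^ (2 * p) - b ^ (2 * p)| ≤ (a ^ p + b ^ p) * |a - b| ^ p := by
  have hsq {c : ℝ} (hc : 0 ≤ c) : c ^ (2 * p) = (c ^ p) ^ 2 := by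
    rw [mul_comm, rpow_mul hc, rpow_two]
  rw [hsq ha, hsq hb, sq_sub_sq, abs_mul, abs_of_nonneg (by positivity : 0 ≤ a ^ p + b ^ p)]
  gcongr
  exact abs_rpow_sub_rpow_le ha hb hp hp1

end Real

open Real

theorem pos_part_rpow_two_p_abs_sub_le (x y p : ℝ) (hp0 : 1/2 < p) (hp1 : p < 1) :
    |max x 0 ^ (2 * p) - max y 0 ^ (2 * p)| ≤ (2 + |x| + |y|) * |x - y| ^ p := by
  have hp : 0 ≤ p := by linarith
  have hx : max x 0 ≤ |x| := max_le (le_abs_self x) (abs_nonneg x)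
  have hy : max y 0 ≤ |y| := max_le (le_abs_self y) (abs_nonneg y)
  have hx_rpow := rpow_le_one_add (le_max_right x 0) hp hp1.le
  have hy_rpow := rpow_le_one_add (le_max_right y 0) hp hp1.le
  calc |max x 0 ^ (2 * p) - max y 0 ^ (2 * p)|
      ≤ (max x 0 ^ p + max y 0 ^ p) * |max x 0 - max y 0| ^ p :=
        abs_rpow_two_mul_sub_rpow_two_mul_le (le_max_right x 0) (le_max_right y 0) hp hp1.le
    _ ≤ (2 + |x| + |y|) * |x - y| ^ p := by
        gcongr ?_ * ?_
        · linarith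
        · exact rpow_le_rpow (abs_nonneg _) (abs_max_sub_max_le_abs x y 0) hp
end

section
/- Let (ξ_k)_{k≥1} be i.i.d. standard Gaussian random variables, p ∈ [1/2, 1), μ ∈ ℝ, σ > 0, T > 0, and X_0 > 0. Define the Euler-Maruyama scheme X^n_{k} = X^n_{k−1} + μ(T/n)(X^n_{k−1})⁺ + σ((X^n_{k−1})⁺)^p √(T/n) ξ_k with X^n_0 = X_0. Then there is a constant r independent of n such that max_{1 ≤ k ≤ n} E[(X^n_k)²] ≤ r for all sufficiently large n. -/
open MeasureTheory ProbabilityTheory Real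

/-!
One step of the scheme maps `Y` to `a(Y) + b(Y) ξ` with `a x = x + μ h x⁺`, `b x = σ (x⁺)^p √h`
and `ξ` standard Gaussian independent of `Y`. Independence kills the cross term, so
`E (a(Y) + b(Y) ξ)² = E a(Y)² + E b(Y)²`. As `|a x| ≤ (1 + |μ| h) |x|` and, because `p ≤ 1`,
`b(x)² ≤ σ² h (1 + x²)`, the quantity `E Y² + 1` grows by at most the factor
`(1 + |μ| h)² + σ² h ≤ exp ((2|μ| + σ²) h)` per step. After `k ≤ n` steps of size `h = T / n`
this gives `E (X^n_k)² ≤ exp ((2|μ| + σ²) T) (X₀² + 1)` for every `n ≥ 1`.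
-/

namespace ProbabilityTheory

variable {Ω : Type*} [MeasurableSpace Ω] {P : Measure Ω}

lemma HasLaw.integral_eq_zero_of_gaussianReal {Z : Ω → ℝ} (hZ : HasLaw Z (gaussianReal 0 1) P) :
    P[Z] = 0 := by
  rw [hZ.integral_eq, integral_id_gaussianReal]

lemma HasLaw.integral_sq_eq_one_of_gaussianReal {Z : Ω → ℝ}
    (hZ : HasLaw Z (gaussianReal 0 1) P) : ∫ ω, Z ω ^ 2 ∂P = 1 := by
  rw [← variance_of_integral_eq_zero hZ.aemeasurable hZ.integral_eq_zero_of_gaussianReal,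
    hZ.variance_eq, variance_id_gaussianReal, NNReal.coe_one]

lemma IndepFun.memLp_two_mul {B Z : Ω → ℝ} (hBZ : IndepFun B Z P) (hB : MemLp B 2 P)
    (hZ : MemLp Z 2 P) : MemLp (B * Z) 2 P := by
  have hsq : IndepFun (fun ω => B ω ^ 2) (fun ω => Z ω ^ 2) P :=
    hBZ.comp (measurable_id.pow_const 2) (measurable_id.pow_const 2)
  refine (memLp_two_iff_integrable_sq (hB.1.mul hZ.1)).2 ?_
  exact (hsq.integrable_mul hB.integrable_sq hZ.integrable_sq).congr
    (.of_forall fun ω => (mul_pow (B ω) (Z ω) 2).symm)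

variable [IsFiniteMeasure P]

lemma integral_sq_add_mul_of_indepFun {A B Z : Ω → ℝ} (hA : MemLp A 2 P) (hB : MemLp B 2 P)
    (hZ : MemLp Z 2 P) (hABZ : IndepFun (fun ω => (A ω, B ω)) Z P) (hZ0 : P[Z] = 0) :
    ∫ ω, (A ω + B ω * Z ω) ^ 2 ∂P
      = ∫ ω, A ω ^ 2 ∂P + (∫ ω, B ω ^ 2 ∂P) * ∫ ω, Z ω ^ 2 ∂P := by
  have hABZ' : IndepFun (fun ω => A ω * B ω) Z P :=
    hABZ.comp (measurable_fst.mul measurable_snd) measurable_id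
  have hBZ2 : IndepFun (fun ω => B ω ^ 2) (fun ω => Z ω ^ 2) P :=
    hABZ.comp (measurable_snd.pow_const 2) (measurable_id.pow_const 2)
  have hAB : Integrable (fun ω => A ω * B ω) P := hA.integrable_mul hB
  have hcross : Integrable (fun ω => 2 * (A ω * B ω * Z ω)) P :=
    ((hABZ'.integrable_mul hAB (hZ.integrable one_le_two)).const_mul 2)
  have hnoise : Integrable (fun ω => B ω ^ 2 * Z ω ^ 2) P :=
    hBZ2.integrable_mul hB.integrable_sq hZ.integrable_sq
  calc ∫ ω, (A ω + B ω * Z ω) ^ 2 ∂P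
      = ∫ ω, (A ω ^ 2 + 2 * (A ω * B ω * Z ω) + B ω ^ 2 * Z ω ^ 2) ∂P := by
        congr 1; ext ω; ring
    _ = ∫ ω, A ω ^ 2 ∂P + 2 * ∫ ω, A ω * B ω * Z ω ∂P + ∫ ω, B ω ^ 2 * Z ω ^ 2 ∂P := by
        rw [integral_add (f := fun ω => A ω ^ 2 + 2 * (A ω * B ω * Z ω))
          (hA.integrable_sq.add hcross) hnoise, integral_add hA.integrable_sq hcross,
          integral_const_mul]
    _ = _ := by
        rw [hABZ'.integral_fun_mul_eq_mul_integral hAB.1 hZ.1,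
          hBZ2.integral_fun_mul_eq_mul_integral hB.integrable_sq.1 hZ.integrable_sq.1, hZ0]
        ring

end ProbabilityTheory

lemma sq_rpow_max_zero_le {p : ℝ} (hp0 : 0 ≤ p) (hp1 : p ≤ 1) (x : ℝ) :
    (max x 0 ^ p) ^ 2 ≤ 1 + x ^ 2 := by
  have hm : 0 ≤ max x 0 := le_max_right x 0
  have hmx : max x 0 ^ 2 ≤ x ^ 2 := by
    rcases le_total x 0 with hx | hx <;> simp [hx]; positivity
  rcases le_total (max x 0) 1 with h1 | h1
  · have : max x 0 ^ p ≤ 1 := rpow_le_one hm h1 hp0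
    nlinarith [rpow_nonneg hm p]
  · have : max x 0 ^ p ≤ max x 0 := by
      simpa using rpow_le_rpow_of_exponent_le h1 hp1
    nlinarith [rpow_nonneg hm p]

namespace EulerMaruyama

def drift (μ h x : ℝ) : ℝ := x + μ * h * max x 0

noncomputable def diffusion (σ p h x : ℝ) : ℝ := σ * max x 0 ^ p * √h

variable {μ σ p h : ℝ}

@[fun_prop]
lemma measurable_drift : Measurable (drift μ h) := by
  unfold drift; fun_prop

@[fun_prop]
lemma measurable_diffusion : Measurable (diffusion σ p h) := by
  unfold diffusion; fun_prop

lemma abs_drift_le (hh : 0 ≤ h) (x : ℝ) : |drift μ h x| ≤ (1 + |μ| * h) * |x| := by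
  rcases le_total x 0 with hx | hx
  · simp only [drift, max_eq_right hx, mul_zero, add_zero]
    exact le_mul_of_one_le_left (abs_nonneg x) (le_add_of_nonneg_right (by positivity))
  · rw [drift, max_eq_left hx, show x + μ * h * x = (1 + μ * h) * x by ring, abs_mul]
    gcongr
    calc |1 + μ * h| ≤ |1| + |μ * h| := abs_add_le _ _
      _ = 1 + |μ| * h := by rw [abs_one, abs_mul, abs_of_nonneg hh]

lemma sq_drift_le (hh : 0 ≤ h) (x : ℝ) : drift μ h x ^ 2 ≤ (1 + |μ| * h) ^ 2 * x ^ 2 := by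
  rw [← sq_abs, ← sq_abs x, ← mul_pow]
  exact pow_le_pow_left₀ (abs_nonneg _) (abs_drift_le hh x) 2

lemma sq_diffusion_le (hp0 : 0 ≤ p) (hp1 : p ≤ 1) (hh : 0 ≤ h) (x : ℝ) :
    diffusion σ p h x ^ 2 ≤ σ ^ 2 * h * (1 + x ^ 2) := by
  rw [diffusion, mul_pow, mul_pow, sq_sqrt hh, mul_right_comm]
  exact mul_le_mul_of_nonneg_left (sq_rpow_max_zero_le hp0 hp1 x) (by positivity)

lemma one_step_growth_le_exp (hh : 0 ≤ h) :
    (1 + |μ| * h) ^ 2 + σ ^ 2 * h ≤ exp ((2 * |μ| + σ ^ 2) * h) := by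
  have hdrift : (1 + |μ| * h) ^ 2 ≤ exp (2 * |μ| * h) := by
    calc (1 + |μ| * h) ^ 2 ≤ exp (|μ| * h) ^ 2 :=
          pow_le_pow_left₀ (by positivity) (by linarith [add_one_le_exp (|μ| * h)]) 2
      _ = exp (2 * |μ| * h) := by rw [sq, ← exp_add]; ring_nf
  calc (1 + |μ| * h) ^ 2 + σ ^ 2 * h ≤ exp (2 * |μ| * h) * (1 + σ ^ 2 * h) := by
        nlinarith [one_le_exp (by positivity : 0 ≤ 2 * |μ| * h), (by positivity : 0 ≤ σ ^ 2 * h)]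
    _ ≤ exp (2 * |μ| * h) * exp (σ ^ 2 * h) := by
        gcongr; linarith [add_one_le_exp (σ ^ 2 * h)]
    _ = exp ((2 * |μ| + σ ^ 2) * h) := by rw [← exp_add]; ring_nf

variable {Ω : Type*} [MeasurableSpace Ω] {P : Measure Ω} {Y Z : Ω → ℝ}

lemma memLp_two_drift (hh : 0 ≤ h) (hY : MemLp Y 2 P) : MemLp (fun ω => drift μ h (Y ω)) 2 P :=
  hY.of_le_mul (measurable_drift.comp_aemeasurable hY.1.aemeasurable).aestronglyMeasurable
    (.of_forall fun ω => abs_drift_le hh (Y ω))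

lemma memLp_two_diffusion [IsFiniteMeasure P] (hp0 : 0 ≤ p) (hp1 : p ≤ 1) (hh : 0 ≤ h)
    (hY : MemLp Y 2 P) :
    MemLp (fun ω => diffusion σ p h (Y ω)) 2 P := by
  have hmeas : AEStronglyMeasurable (fun ω => diffusion σ p h (Y ω)) P :=
    (measurable_diffusion.comp_aemeasurable hY.1.aemeasurable).aestronglyMeasurable
  refine (memLp_two_iff_integrable_sq hmeas).2 <|
    (((integrable_const 1).add hY.integrable_sq).const_mul (σ ^ 2 * h)).mono' (hmeas.pow 2) ?_
  filter_upwards with ω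
  rw [Real.norm_of_nonneg (sq_nonneg _)]
  exact sq_diffusion_le hp0 hp1 hh (Y ω)

lemma memLp_two_step [IsFiniteMeasure P] (hp0 : 0 ≤ p) (hp1 : p ≤ 1) (hh : 0 ≤ h)
    (hY : MemLp Y 2 P) (hZ : HasLaw Z (gaussianReal 0 1) P) (hYZ : IndepFun Y Z P) :
    MemLp (fun ω => drift μ h (Y ω) + diffusion σ p h (Y ω) * Z ω) 2 P :=
  (memLp_two_drift hh hY).add <|
    (hYZ.comp measurable_diffusion measurable_id).memLp_two_mul
      (memLp_two_diffusion hp0 hp1 hh hY) hZ.hasGaussianLaw.memLp_two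

lemma integral_sq_step_add_one_le [IsProbabilityMeasure P] (hp0 : 0 ≤ p) (hp1 : p ≤ 1)
    (hh : 0 ≤ h) (hY : MemLp Y 2 P) (hZ : HasLaw Z (gaussianReal 0 1) P) (hYZ : IndepFun Y Z P) :
    ∫ ω, (drift μ h (Y ω) + diffusion σ p h (Y ω) * Z ω) ^ 2 ∂P + 1
      ≤ ((1 + |μ| * h) ^ 2 + σ ^ 2 * h) * (∫ ω, Y ω ^ 2 ∂P + 1) := by
  have hA := memLp_two_drift (μ := μ) hh hY
  have hB := memLp_two_diffusion (σ := σ) hp0 hp1 hh hY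
  rw [integral_sq_add_mul_of_indepFun hA hB hZ.hasGaussianLaw.memLp_two
      (hYZ.comp (measurable_drift.prodMk measurable_diffusion) measurable_id)
      hZ.integral_eq_zero_of_gaussianReal, hZ.integral_sq_eq_one_of_gaussianReal, mul_one]
  have hdrift : ∫ ω, drift μ h (Y ω) ^ 2 ∂P ≤ (1 + |μ| * h) ^ 2 * ∫ ω, Y ω ^ 2 ∂P := by
    rw [← integral_const_mul]
    exact integral_mono hA.integrable_sq (hY.integrable_sq.const_mul _)
      fun ω => sq_drift_le hh (Y ω)
  have hnoise : ∫ ω, diffusion σ p h (Y ω) ^ 2 ∂P ≤ σ ^ 2 * h * (1 + ∫ ω, Y ω ^ 2 ∂P) := by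
    have hmean : ∫ ω, (1 + Y ω ^ 2) ∂P = 1 + ∫ ω, Y ω ^ 2 ∂P := by
      rw [integral_add (integrable_const 1) hY.integrable_sq, integral_const, probReal_univ,
        one_smul]
    rw [← hmean, ← integral_const_mul]
    exact integral_mono hB.integrable_sq
      (((integrable_const 1).add hY.integrable_sq).const_mul _)
      fun ω => sq_diffusion_le hp0 hp1 hh (Y ω)
  have hm : 0 ≤ ∫ ω, Y ω ^ 2 ∂P := integral_nonneg fun ω => sq_nonneg _
  have hgrowth : 1 ≤ (1 + |μ| * h) ^ 2 := one_le_pow₀ (le_add_of_nonneg_right (by positivity))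
  nlinarith

lemma memLp_two_and_integral_sq_add_one_le_pow [IsProbabilityMeasure P] {X ξ : ℕ → Ω → ℝ}
    (hp0 : 0 ≤ p) (hp1 : p ≤ 1) (hh : 0 ≤ h) (hX0 : MemLp (X 0) 2 P)
    (hrec : ∀ k, X (k + 1) = fun ω => drift μ h (X k ω) + diffusion σ p h (X k ω) * ξ (k + 1) ω)
    (hξ : ∀ k, HasLaw (ξ (k + 1)) (gaussianReal 0 1) P) (hXξ : ∀ k, IndepFun (X k) (ξ (k + 1)) P)
    (k : ℕ) :
    MemLp (X k) 2 P ∧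
      ∫ ω, X k ω ^ 2 ∂P + 1 ≤ ((1 + |μ| * h) ^ 2 + σ ^ 2 * h) ^ k * (∫ ω, X 0 ω ^ 2 ∂P + 1) := by
  induction k with
  | zero => simpa using hX0
  | succ k ih =>
    obtain ⟨hL2, hle⟩ := ih
    rw [hrec k, pow_succ', mul_assoc]
    refine ⟨memLp_two_step hp0 hp1 hh hL2 (hξ k) (hXξ k), ?_⟩
    exact (integral_sq_step_add_one_le hp0 hp1 hh hL2 (hξ k) (hXξ k)).trans
      (mul_le_mul_of_nonneg_left hle (by positivity))

end EulerMaruyama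

theorem euler_maruyama_second_moment_bound_general
    {Ω : Type*} [MeasurableSpace Ω] (P : Measure Ω) [IsProbabilityMeasure P]
    (ξ : ℕ → Ω → ℝ) (hξm : ∀ k, Measurable (ξ k))
    (hξlaw : ∀ k, Measure.map (ξ k) P = gaussianReal 0 1)
    (p μ σ T X₀ : ℝ) (hp : 1/2 ≤ p) (hp1 : p < 1) (hT : 0 < T)
    (X : ℕ → ℕ → Ω → ℝ)
    (hX0 : ∀ n, X n 0 = fun _ => X₀)
    (hrec : ∀ n : ℕ, 1 ≤ n → ∀ k : ℕ, ∀ ω,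
      X n (k + 1) ω = X n k ω + μ * (T / n) * max (X n k ω) 0
        + σ * max (X n k ω) 0 ^ p * Real.sqrt (T / n) * ξ (k + 1) ω)
    (hξX : ∀ n k, IndepFun (ξ (k + 1)) (fun ω => fun i : Fin (k + 1) => X n i ω) P) :
    ∃ r : ℝ, 0 < r ∧ ∃ N : ℕ, ∀ n : ℕ, N ≤ n → ∀ k : ℕ, k ≤ n →
      ∫⁻ ω, ENNReal.ofReal ((X n k ω) ^ 2) ∂P ≤ ENNReal.ofReal r := by
  set D := 2 * |μ| + σ ^ 2
  refine ⟨exp (D * T) * (X₀ ^ 2 + 1), by positivity, 1, fun n hn k hk => ?_⟩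
  have hh : 0 ≤ T / n := by positivity
  have hlaw k : HasLaw (ξ (k + 1)) (gaussianReal 0 1) P := ⟨(hξm _).aemeasurable, hξlaw _⟩
  have hXξ k : IndepFun (X n k) (ξ (k + 1)) P :=
    ((hξX n k).comp measurable_id (measurable_pi_apply (Fin.last k))).symm
  obtain ⟨hL2, hle⟩ :=
    EulerMaruyama.memLp_two_and_integral_sq_add_one_le_pow (by linarith) hp1.le hh
      (by rw [hX0 n]; exact memLp_const X₀) (fun k => funext (hrec n hn k)) hlaw hXξ k
  have hkT : T / n * k ≤ T := by
    rw [div_mul_eq_mul_div, div_le_iff₀ (by exact_mod_cast hn)]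
    exact mul_le_mul_of_nonneg_left (by exact_mod_cast hk) hT.le
  rw [← ofReal_integral_eq_lintegral_ofReal hL2.integrable_sq (.of_forall fun ω => sq_nonneg _)]
  refine ENNReal.ofReal_le_ofReal ?_
  calc ∫ ω, X n k ω ^ 2 ∂P
      ≤ ((1 + |μ| * (T / n)) ^ 2 + σ ^ 2 * (T / n)) ^ k * (X₀ ^ 2 + 1) := by
        simp only [hX0 n, integral_const, probReal_univ, one_smul] at hle
        linarith
    _ ≤ exp (D * (T / n)) ^ k * (X₀ ^ 2 + 1) := by
        gcongr; exact EulerMaruyama.one_step_growth_le_exp hh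
    _ = exp (D * (T / n * k)) * (X₀ ^ 2 + 1) := by rw [← exp_nat_mul]; ring_nf
    _ ≤ exp (D * T) * (X₀ ^ 2 + 1) := by gcongr

theorem euler_maruyama_second_moment_bound
    {Ω : Type*} [MeasurableSpace Ω] (P : Measure Ω) [IsProbabilityMeasure P]
    (ξ : ℕ → Ω → ℝ) (hξm : ∀ k, Measurable (ξ k))
    (hξindep : iIndepFun ξ P)
    (hξlaw : ∀ k, Measure.map (ξ k) P = gaussianReal 0 1)
    (p μ σ T X₀ : ℝ) (hp : 1/2 ≤ p) (hp1 : p < 1) (hσ : 0 < σ) (hT : 0 < T)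
    (hX₀ : 0 < X₀)
    (X : ℕ → ℕ → Ω → ℝ) (hXm : ∀ n k, Measurable (X n k))
    (hX0 : ∀ n, X n 0 = fun _ => X₀)
    (hrec : ∀ n : ℕ, 1 ≤ n → ∀ k : ℕ, ∀ ω,
      X n (k + 1) ω = X n k ω + μ * (T / n) * max (X n k ω) 0
        + σ * max (X n k ω) 0 ^ p * Real.sqrt (T / n) * ξ (k + 1) ω)
    (hξX : ∀ n k, IndepFun (ξ (k + 1)) (fun ω => fun i : Fin (k + 1) => X n i ω) P) :
    ∃ r : ℝ, 0 < r ∧ ∃ N : ℕ, ∀ n : ℕ, N ≤ n → ∀ k : ℕ, k ≤ n →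
      ∫⁻ ω, ENNReal.ofReal ((X n k ω) ^ 2) ∂P ≤ ENNReal.ofReal r :=
  euler_maruyama_second_moment_bound_general P ξ hξm hξlaw p μ σ T X₀ hp hp1 hT X hX0 hrec hξX
end
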